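/- arXiv:nlin/0511068 — 3 statements merged into one kernel-verified Lean document; each statement's English description precedes it below -/
import Mathlib

section
/- Let f_n(x) = Σ_{m=1}^M a_{n,m} e^{k_m x} with N ≤ M. Then Wr(f_1,…,f_N)(x) = Σ_{1 ≤ m_1 < ⋯ < m_N ≤ M} V(m_1,…,m_N) · A(m_1,…,m_N) · exp(k_{m_1}x + ⋯ + k_{m_N}x), where A(m_1,…,m_N) is the N×N minor of A from columns m_1,…,m_N and V(m_1,…,m_N) = Π_{s_1<s_2} (k_{m_{s_2}} − k_{m_{s_1}}) is the Vandermonde determinant. -/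
/-!
The Wronskian matrix factors as `V * Aᵀ` with `V i m = k_m ^ i * exp (k_m x)`, so the
Cauchy–Binet formula expands its determinant over the increasing column tuples `s`. The minor of
`V` on the columns `s` is the transposed Vandermonde matrix of `k ∘ s` with its columns scaled by
`exp (k_{s j} x)`.

Cauchy–Binet itself comes from expanding `det (B * C)` multilinearly in the rows: tuples of
columns with a repetition contribute nothing, and every injective tuple is uniquely a strictly
monotone one composed with a permutation, whose sign is absorbed into the minor of `B`.
-/

open scoped Classical

open Finset Matrix

theorem iteratedDeriv_sum_mul_exp {ι : Type*} [Fintype ι] (c k : ι → ℝ) (i : ℕ) (x : ℝ) :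
    iteratedDeriv i (fun z => ∑ m, c m * Real.exp (k m * z)) x
      = ∑ m, c m * (k m ^ i * Real.exp (k m * x)) := by
  rw [iteratedDeriv_fun_sum fun m _ => by fun_prop]
  simp

theorem StrictMono.exists_comp_perm_eq {N : ℕ} {ι : Type*} [LinearOrder ι] {f : Fin N → ι}
    (hf : Function.Injective f) :
    ∃ s : Fin N → ι, StrictMono s ∧ ∃ σ : Equiv.Perm (Fin N), s ∘ σ = f :=
  ⟨f ∘ Tuple.sort f, (Tuple.monotone_sort f).strictMono_of_injective
    (hf.comp (Tuple.sort f).injective), (Tuple.sort f)⁻¹, by ext; simp⟩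

theorem StrictMono.eq_of_comp_perm_eq {N : ℕ} {ι : Type*} [LinearOrder ι] {s s' : Fin N → ι}
    (hs : StrictMono s) (hs' : StrictMono s') {σ σ' : Equiv.Perm (Fin N)}
    (h : s ∘ σ = s' ∘ σ') : s = s' ∧ σ = σ' := by
  obtain rfl : s = s' := by
    rw [← hs.range_inj hs', ← σ.surjective.range_comp, h, σ'.surjective.range_comp]
  exact ⟨rfl, Equiv.ext fun i => hs.injective (congrFun h i)⟩

theorem Finset.sum_injective_eq_sum_strictMono_sum_perm {N : ℕ} {ι β : Type*} [Fintype ι]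
    [LinearOrder ι] [AddCommMonoid β] (g : (Fin N → ι) → β) :
    ∑ f with Function.Injective f, g f
      = ∑ s with StrictMono s, ∑ σ : Equiv.Perm (Fin N), g (s ∘ σ) := by
  rw [← sum_product']
  symm
  refine sum_nbij (fun p => p.1 ∘ p.2) ?_ ?_ ?_ fun _ _ => rfl
  · simp only [mem_product, mem_filter_univ, mem_univ, and_true]
    exact fun p hp => hp.injective.comp p.2.injective
  · simp only [Set.InjOn, coe_product, coe_filter, mem_univ, true_and, coe_univ,
      Set.mem_prod, Set.mem_ofPred_eq, Set.mem_univ, and_true]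
    exact fun p hp q hq h => Prod.ext_iff.2 (hp.eq_of_comp_perm_eq hq h)
  · intro f hf
    obtain ⟨s, hs, σ, rfl⟩ := StrictMono.exists_comp_perm_eq (by simpa using hf)
    exact ⟨(s, σ), by simpa using hs, rfl⟩

theorem Matrix.det_mul_eq_sum_prod_mul_det_submatrix {n ι R : Type*} [Fintype n] [DecidableEq n]
    [Fintype ι] [CommRing R] (B : Matrix n ι R) (C : Matrix ι n R) :
    (B * C).det = ∑ f : n → ι, (∏ i, B i (f i)) * (C.submatrix f id).det := by
  have hrows : (B * C).det = detRowAlternating fun i => ∑ m, B i m • C m := by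
    congr 1
    ext i j
    simp [mul_apply]
  rw [hrows, ← AlternatingMap.coe_multilinearMap, MultilinearMap.map_sum]
  simp_rw [MultilinearMap.map_smul_univ, smul_eq_mul]
  rfl

theorem Matrix.det_submatrix_eq_zero_of_not_injective {m n R : Type*} [Fintype n] [DecidableEq n]
    [CommRing R] (C : Matrix m n R) {f : n → m} (hf : ¬ Function.Injective f) :
    (C.submatrix f id).det = 0 := by
  obtain ⟨i, j, hij, hne⟩ := Function.not_injective_iff.1 hf
  exact det_zero_of_row_eq hne (by ext; simp [hij])

theorem Matrix.det_mul_eq_sum_det_submatrix_mul_det_submatrix {N : ℕ} {ι R : Type*} [Fintype ι]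
    [LinearOrder ι] [CommRing R] (B : Matrix (Fin N) ι R) (C : Matrix ι (Fin N) R) :
    (B * C).det = ∑ s with StrictMono s, (B.submatrix id s).det * (C.submatrix s id).det := by
  rw [det_mul_eq_sum_prod_mul_det_submatrix, ← sum_filter_of_ne fun f _ hf => by_contra fun h =>
      hf (by rw [C.det_submatrix_eq_zero_of_not_injective h, mul_zero]),
    sum_injective_eq_sum_strictMono_sum_perm]
  refine sum_congr rfl fun s _ => ?_
  have hperm (σ : Equiv.Perm (Fin N)) :
      (C.submatrix (s ∘ σ) id).det = Equiv.Perm.sign σ * (C.submatrix s id).det := by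
    rw [← det_permute]; rfl
  calc ∑ σ : Equiv.Perm (Fin N), (∏ i, B i ((s ∘ σ) i)) * (C.submatrix (s ∘ σ) id).det
      = (∑ σ : Equiv.Perm (Fin N), Equiv.Perm.sign σ * ∏ i, (B.submatrix id s)ᵀ (σ i) i)
          * (C.submatrix s id).det := by
        rw [sum_mul]
        refine sum_congr rfl fun σ _ => ?_
        rw [hperm]
        simp only [Function.comp_apply, transpose_apply, submatrix_apply, id]
        ring
    _ = (B.submatrix id s).det * (C.submatrix s id).det := by
        rw [← det_apply', det_transpose]

theorem Matrix.det_vandermonde_eq_prod_lt {n : ℕ} {R : Type*} [CommRing R] (v : Fin n → R) :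
    (vandermonde v).det = ∏ p : Fin n × Fin n with p.1 < p.2, (v p.2 - v p.1) := by
  simp_rw [det_vandermonde, prod_filter, Fintype.prod_prod_type, ← prod_filter, filter_lt_eq_Ioi]

theorem wronskian_eq_sum_minors_general (N M : ℕ)
    (A : Matrix (Fin N) (Fin M) ℝ) (k : Fin M → ℝ) (x : ℝ) :
    (Matrix.of fun (i n : Fin N) =>
        iteratedDeriv (i : ℕ) (fun z => ∑ m, A n m * Real.exp (k m * z)) x).det
    = ∑ s ∈ Finset.univ.filter (fun s : Fin N → Fin M => StrictMono s),
        (∏ p ∈ Finset.univ.filter (fun p : Fin N × Fin N => p.1 < p.2),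
            (k (s p.2) - k (s p.1)))
        * (A.submatrix id s).det
        * Real.exp (∑ j, k (s j) * x) := by
  let V : Matrix (Fin N) (Fin M) ℝ := of fun i m => k m ^ (i : ℕ) * Real.exp (k m * x)
  have hW : (of fun (i n : Fin N) =>
      iteratedDeriv (i : ℕ) (fun z => ∑ m, A n m * Real.exp (k m * z)) x) = V * Aᵀ := by
    ext i n
    rw [of_apply, iteratedDeriv_sum_mul_exp, mul_apply]
    exact sum_congr rfl fun m _ => by simp only [V, of_apply, transpose_apply]; ring
  rw [hW, det_mul_eq_sum_det_submatrix_mul_det_submatrix]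
  refine sum_congr rfl fun s _ => ?_
  have hVs : V.submatrix id s
      = of fun i j => Real.exp (k (s j) * x) * (vandermonde (k ∘ s))ᵀ i j := by
    ext i j
    simp [V, vandermonde, mul_comm]
  rw [hVs, det_mul_row, det_transpose, det_vandermonde_eq_prod_lt, ← transpose_submatrix,
    det_transpose, Real.exp_sum]
  simp only [Function.comp_apply]
  ring

/-- Binet–Cauchy expansion of the Wronskian of sums of exponentials:
`Wr(f_1,…,f_N)(x) = ∑_{m_1<⋯<m_N} V(m) A(m) exp((k_{m_1}+⋯+k_{m_N}) x)`. -/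
theorem wronskian_eq_sum_minors (N M : ℕ) (hNM : N ≤ M)
    (A : Matrix (Fin N) (Fin M) ℝ) (k : Fin M → ℝ) (x : ℝ) :
    (Matrix.of fun (i n : Fin N) =>
        iteratedDeriv (i : ℕ) (fun z => ∑ m, A n m * Real.exp (k m * z)) x).det
    = ∑ s ∈ Finset.univ.filter (fun s : Fin N → Fin M => StrictMono s),
        (∏ p ∈ Finset.univ.filter (fun p : Fin N × Fin N => p.1 < p.2),
            (k (s p.2) - k (s p.1)))
        * (A.submatrix id s).det
        * Real.exp (∑ j, k (s j) * x) :=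
  wronskian_eq_sum_minors_general N M A k x
end

section
/- Suppose k_1 < ⋯ < k_M and all N×N minors A(m_1,…,m_N) of the N×M matrix A are nonnegative, with at least one strictly positive. Then the tau-function τ(x) = Σ_{m_1<⋯<m_N} V(m_1,…,m_N) A(m_1,…,m_N) e^{(k_{m_1}+⋯+k_{m_N})x} is strictly positive for all real x. -/
open scoped Classical

theorem prod_sub_pos_of_strictMono {ι R : Type*} [Fintype ι] [LinearOrder ι] [CommRing R]
    [PartialOrder R] [IsStrictOrderedRing R] {f : ι → R} (hf : StrictMono f) :
    0 < ∏ p ∈ Finset.univ.filter (fun p : ι × ι => p.1 < p.2), (f p.2 - f p.1) :=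
  Finset.prod_pos fun _ hp => sub_pos.mpr (hf (Finset.mem_filter.mp hp).2)

theorem tau_pos_general (N M : ℕ) (A : Matrix (Fin N) (Fin M) ℝ)
    (k : Fin M → ℝ) (hk : StrictMono k)
    (hnonneg : ∀ s : Fin N → Fin M, StrictMono s → 0 ≤ (A.submatrix id s).det)
    (hpos : ∃ s : Fin N → Fin M, StrictMono s ∧ 0 < (A.submatrix id s).det)
    (x : ℝ) :
    0 < ∑ s ∈ Finset.univ.filter (fun s : Fin N → Fin M => StrictMono s),
        (∏ p ∈ Finset.univ.filter (fun p : Fin N × Fin N => p.1 < p.2),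
            (k (s p.2) - k (s p.1)))
        * (A.submatrix id s).det
        * Real.exp ((∑ j, k (s j)) * x) := by
  have hV {s : Fin N → Fin M} (hs : StrictMono s) :=
    prod_sub_pos_of_strictMono (hk.comp hs)
  obtain ⟨s₀, hs₀, hdet₀⟩ := hpos
  refine Finset.sum_pos' (fun s hs => ?_) ⟨s₀, by simpa using hs₀, ?_⟩
  · have hs := (Finset.mem_filter.mp hs).2
    exact mul_nonneg (mul_nonneg (hV hs).le (hnonneg s hs)) (Real.exp_pos _).le
  · exact mul_pos (mul_pos (hV hs₀) hdet₀) (Real.exp_pos _)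

/-- If `k_1 < ⋯ < k_M` and all maximal minors of `A` are
nonnegative with at least one strictly positive, then the tau-function
`τ(x) = ∑ V(m) A(m) exp((k_{m_1}+⋯+k_{m_N}) x)` is strictly positive. -/
theorem tau_pos (N M : ℕ) (hNM : N ≤ M) (A : Matrix (Fin N) (Fin M) ℝ)
    (k : Fin M → ℝ) (hk : StrictMono k)
    (hnonneg : ∀ s : Fin N → Fin M, StrictMono s → 0 ≤ (A.submatrix id s).det)
    (hpos : ∃ s : Fin N → Fin M, StrictMono s ∧ 0 < (A.submatrix id s).det)
    (x : ℝ) :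
    0 < ∑ s ∈ Finset.univ.filter (fun s : Fin N → Fin M => StrictMono s),
        (∏ p ∈ Finset.univ.filter (fun p : Fin N × Fin N => p.1 < p.2),
            (k (s p.2) - k (s p.1)))
        * (A.submatrix id s).det
        * Real.exp ((∑ j, k (s j)) * x) :=
  tau_pos_general N M A k hk hnonneg hpos x
end

section
/- Suppose k_1 < ⋯ < k_M, N ≤ M, and all N×N minors of A are nonnegative with rank(A) = N. Then for every finite y, t, as x → −∞, the dominant phase combination of τ = Σ V(m_1,…,m_N) A(m_1,…,m_N) e^{θ_{m_1,…,m_N}} is the one with nonzero minor minimizing k_{m_1} + ⋯ + k_{m_N}; precisely, if (m_1*,…,m_N*) attains the strict minimum of Σ_j k_{m_j} over tuples with A(m_1,…,m_N) ≠ 0, then τ(x,y,t) · e^{−θ_{m_1*,…,m_N*}(x,y,t)} → V(m_1*,…,m_N*) A(m_1*,…,m_N*) as x → −∞ with y, t fixed. -/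
/-!
After factoring out `e^{θ_{s⋆}}`, each term of `τ` becomes a constant times
`exp ((K s - K s⋆) x + const)` with `K s = ∑ j, k (s j)`. Every term with nonzero
coefficient other than `s⋆` has `K s - K s⋆ > 0` and so vanishes as `x → -∞`,
leaving only the coefficient `V(s⋆) A(s⋆)`.
-/

open Filter Real Topology

theorem tendsto_mul_exp_atBot_zero {a : ℝ} (ha : 0 < a) (b c : ℝ) :
    Tendsto (fun x : ℝ => c * exp (a * x + b)) atBot (𝓝 0) := by
  have hlin : Tendsto (fun x : ℝ => a * x + b) atBot atBot :=
    tendsto_atBot_add_const_right _ b (tendsto_id.const_mul_atBot ha)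
  simpa using (tendsto_exp_atBot.comp hlin).const_mul c

theorem tendsto_sum_mul_exp_mul_exp_neg_atBot {ι : Type*} [DecidableEq ι] (S : Finset ι)
    (c K C : ι → ℝ) {i : ι} (hi : i ∈ S)
    (hmin : ∀ s ∈ S, s ≠ i → c s ≠ 0 → K i < K s) :
    Tendsto (fun x : ℝ => (∑ s ∈ S, c s * exp (K s * x + C s)) * exp (-(K i * x + C i)))
      atBot (𝓝 (c i)) := by
  have hterm : ∀ s ∈ S, Tendsto (fun x : ℝ => c s * exp ((K s - K i) * x + (C s - C i)))
      atBot (𝓝 (if s = i then c i else 0)) := by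
    intro s hs
    by_cases hsi : s = i
    · subst hsi
      simp
    by_cases hc : c s = 0
    · simp [hsi, hc]
    simpa [hsi] using tendsto_mul_exp_atBot_zero (sub_pos.2 (hmin s hs hsi hc)) _ (c s)
  have hsum := tendsto_finsetSum S hterm
  rw [Finset.sum_ite_eq' S i, if_pos hi] at hsum
  refine hsum.congr fun x => ?_
  rw [Finset.sum_mul]
  refine Finset.sum_congr rfl fun s _ => ?_
  rw [mul_assoc, ← exp_add]
  ring_nf

theorem sum_phase_eq {κ : Type*} [Fintype κ] (u θ : κ → ℝ) (x y t : ℝ) :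
    ∑ j, (u j * x + u j ^ 2 * y + u j ^ 3 * t + θ j)
      = (∑ j, u j) * x + ∑ j, (u j ^ 2 * y + u j ^ 3 * t + θ j) := by
  rw [Finset.sum_mul, ← Finset.sum_add_distrib]
  exact Finset.sum_congr rfl fun j _ => by ring

theorem dominant_phase_at_minus_infinity_general (N M : ℕ)
    (A : Matrix (Fin N) (Fin M) ℝ) (k θ₀ : Fin M → ℝ)
    (sstar : Fin N → Fin M) (hsstar : StrictMono sstar)
    (hmin : ∀ s : Fin N → Fin M, StrictMono s → (A.submatrix id s).det ≠ 0 →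
      s ≠ sstar → (∑ j, k (sstar j)) < ∑ j, k (s j))
    (y t : ℝ) :
    Filter.Tendsto (fun x : ℝ =>
        (∑ s ∈ Finset.univ.filter (fun s : Fin N → Fin M => StrictMono s),
          (∏ p ∈ Finset.univ.filter (fun p : Fin N × Fin N => p.1 < p.2),
              (k (s p.2) - k (s p.1)))
          * (A.submatrix id s).det
          * Real.exp (∑ j, (k (s j) * x + k (s j) ^ 2 * y + k (s j) ^ 3 * t + θ₀ (s j))))
        * Real.exp (-(∑ j, (k (sstar j) * x + k (sstar j) ^ 2 * y
            + k (sstar j) ^ 3 * t + θ₀ (sstar j)))))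
      Filter.atBot
      (nhds ((∏ p ∈ Finset.univ.filter (fun p : Fin N × Fin N => p.1 < p.2),
          (k (sstar p.2) - k (sstar p.1))) * (A.submatrix id sstar).det)) := by
  simp only [sum_phase_eq]
  refine tendsto_sum_mul_exp_mul_exp_neg_atBot _
    (fun s => (∏ p ∈ Finset.univ.filter (fun p : Fin N × Fin N => p.1 < p.2),
      (k (s p.2) - k (s p.1))) * (A.submatrix id s).det) _ _
    (by simpa using hsstar) fun s hs hne hc => ?_
  exact hmin s (by simpa using hs) (right_ne_zero_of_mul hc) hne

/-- With `k_1 < ⋯ < k_M`, `rank A = N` and all maximal minors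
nonnegative, if the increasing tuple `s⋆` (with nonzero minor) strictly
minimizes `∑_j k_{m_j}` among tuples with nonzero minor, then as `x → -∞`
with `y, t` fixed, `τ e^{-θ_{s⋆}} → V(s⋆) A(s⋆)`: the phase combination of
`s⋆` dominates. -/
theorem dominant_phase_at_minus_infinity (N M : ℕ) (hNM : N ≤ M)
    (A : Matrix (Fin N) (Fin M) ℝ) (k θ₀ : Fin M → ℝ) (hk : StrictMono k)
    (hrank : A.rank = N)
    (hnonneg : ∀ s : Fin N → Fin M, StrictMono s → 0 ≤ (A.submatrix id s).det)
    (sstar : Fin N → Fin M) (hsstar : StrictMono sstar)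
    (hne : (A.submatrix id sstar).det ≠ 0)
    (hmin : ∀ s : Fin N → Fin M, StrictMono s → (A.submatrix id s).det ≠ 0 →
      s ≠ sstar → (∑ j, k (sstar j)) < ∑ j, k (s j))
    (y t : ℝ) :
    Filter.Tendsto (fun x : ℝ =>
        (∑ s ∈ Finset.univ.filter (fun s : Fin N → Fin M => StrictMono s),
          (∏ p ∈ Finset.univ.filter (fun p : Fin N × Fin N => p.1 < p.2),
              (k (s p.2) - k (s p.1)))
          * (A.submatrix id s).det
          * Real.exp (∑ j, (k (s j) * x + k (s j) ^ 2 * y + k (s j) ^ 3 * t + θ₀ (s j))))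
        * Real.exp (-(∑ j, (k (sstar j) * x + k (sstar j) ^ 2 * y
            + k (sstar j) ^ 3 * t + θ₀ (sstar j)))))
      Filter.atBot
      (nhds ((∏ p ∈ Finset.univ.filter (fun p : Fin N × Fin N => p.1 < p.2),
          (k (sstar p.2) - k (sstar p.1))) * (A.submatrix id sstar).det)) :=
  dominant_phase_at_minus_infinity_general N M A k θ₀ sstar hsstar hmin y t
end
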